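/- A bipartite density operator ρ on H₁ ⊗ H₂ is separable if and only if there exists a convex subset S_ρ of the density operators with ρ ∈ S_ρ and (Λ∘τ)(S_ρ) = S_ρ; moreover S_ρ can be taken to be a polytope (convex hull of finitely many points). -/

import Mathlib

open Matrix Finset
open scoped Kronecker ComplexOrder

def IsDensity {d : Type} [Fintype d] [DecidableEq d] (ρ : Matrix d d ℂ) : Prop :=
  ρ.PosSemidef ∧ ρ.trace = 1

noncomputable def ptr₂ {n m : ℕ} (ρ : Matrix (Fin n × Fin m) (Fin n × Fin m) ℂ) :
    Matrix (Fin n) (Fin n) ℂ :=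
  Matrix.of fun i j => ∑ k : Fin m, ρ (i, k) (j, k)

noncomputable def ptr₁ {n m : ℕ} (ρ : Matrix (Fin n × Fin m) (Fin n × Fin m) ℂ) :
    Matrix (Fin m) (Fin m) ℂ :=
  Matrix.of fun i j => ∑ k : Fin n, ρ (k, i) (k, j)

def SepState {n m : ℕ} (ρ : Matrix (Fin n × Fin m) (Fin n × Fin m) ℂ) : Prop :=
  ∃ (k : ℕ) (p : Fin k → ℝ) (a : Fin k → Matrix (Fin n) (Fin n) ℂ)
    (b : Fin k → Matrix (Fin m) (Fin m) ℂ),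
    (∀ i, 0 ≤ p i) ∧ (∑ i, p i) = 1 ∧ (∀ i, IsDensity (a i) ∧ IsDensity (b i)) ∧
    ρ = ∑ i, p i • (a i ⊗ₖ b i)

def Lam {n m : ℕ} (C₁ : Set (Matrix (Fin n) (Fin n) ℂ))
    (C₂ : Set (Matrix (Fin m) (Fin m) ℂ)) :
    Set (Matrix (Fin n × Fin m) (Fin n × Fin m) ℂ) :=
  convexHull ℝ {x | ∃ ρ₁ ∈ C₁, ∃ ρ₂ ∈ C₂, x = ρ₁ ⊗ₖ ρ₂}

noncomputable def LamTau {n m : ℕ} (C : Set (Matrix (Fin n × Fin m) (Fin n × Fin m) ℂ)) :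
    Set (Matrix (Fin n × Fin m) (Fin n × Fin m) ℂ) :=
  Lam (ptr₂ '' C) (ptr₁ '' C)

noncomputable def outer {d : Type} [Fintype d] (ψ : d → ℂ) : Matrix d d ℂ :=
  Matrix.of fun x y => ψ x * star (ψ y)

/-! A separable ρ = ∑ pᵢ aᵢ ⊗ bᵢ lies in the polytope spanned by all aⱼ ⊗ bₖ, and this polytope
is Λ∘τ-invariant: partial traces are linear, so they commute with convex hulls; a product of
trace-one matrices is the product of its own marginals; and since ⊗ is bilinear, the convex hull
of products of convex hulls is the convex hull of the products. Conversely, if ρ ∈ S = (Λ∘τ)(S)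
then ρ is a convex combination of products of marginals of density operators, which are again
density operators. -/

lemma convexHull_image2_convexHull {𝕜 E F G : Type*} [Field 𝕜] [LinearOrder 𝕜]
    [IsStrictOrderedRing 𝕜] [AddCommGroup E] [AddCommGroup F] [AddCommGroup G]
    [Module 𝕜 E] [Module 𝕜 F] [Module 𝕜 G] (f : E →ₗ[𝕜] F →ₗ[𝕜] G) (s : Set E) (t : Set F) :
    convexHull 𝕜 (Set.image2 (fun x y => f x y) (convexHull 𝕜 s) (convexHull 𝕜 t)) =
      convexHull 𝕜 (Set.image2 (fun x y => f x y) s t) := by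
  refine (convexHull_min ?_ (convex_convexHull 𝕜 _)).antisymm
    (convexHull_mono (Set.image2_subset (subset_convexHull 𝕜 s) (subset_convexHull 𝕜 t)))
  rintro _ ⟨x, hx, y, hy, rfl⟩
  have hxy : f x y ∈ convexHull 𝕜 (f.flip y '' s) := by
    rw [← LinearMap.image_convexHull]; exact ⟨x, hx, rfl⟩
  refine convexHull_min ?_ (convex_convexHull 𝕜 _) hxy
  rintro _ ⟨x', hx', rfl⟩
  have hx'y : f x' y ∈ convexHull 𝕜 (f x' '' t) := by
    rw [← LinearMap.image_convexHull]; exact ⟨y, hy, rfl⟩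
  exact convexHull_mono (Set.image_subset_image2_right hx') hx'y

section density
variable {d : Type} [Fintype d] [DecidableEq d]

lemma convex_setOf_isDensity : Convex ℝ {M : Matrix d d ℂ | IsDensity M} := by
  rintro x ⟨hx, hx1⟩ y ⟨hy, hy1⟩ a b ha hb hab
  refine ⟨(hx.smul ha).add (hy.smul hb), ?_⟩
  rw [trace_add, trace_smul, trace_smul, hx1, hy1, ← add_smul, hab, one_smul]

end density

section partialTrace
variable {n m : ℕ}

lemma IsDensity.kronecker {A : Matrix (Fin n) (Fin n) ℂ} {B : Matrix (Fin m) (Fin m) ℂ}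
    (hA : IsDensity A) (hB : IsDensity B) : IsDensity (A ⊗ₖ B) :=
  ⟨hA.1.kronecker hB.1, by rw [trace_kronecker, hA.2, hB.2, mul_one]⟩

lemma ptr₂_eq_sum_submatrix (ρ : Matrix (Fin n × Fin m) (Fin n × Fin m) ℂ) :
    ptr₂ ρ = ∑ k, ρ.submatrix (·, k) (·, k) := by
  ext i j; simp [ptr₂, Matrix.sum_apply]

lemma ptr₁_eq_sum_submatrix (ρ : Matrix (Fin n × Fin m) (Fin n × Fin m) ℂ) :
    ptr₁ ρ = ∑ k, ρ.submatrix (k, ·) (k, ·) := by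
  ext i j; simp [ptr₁, Matrix.sum_apply]

lemma trace_ptr₂ (ρ : Matrix (Fin n × Fin m) (Fin n × Fin m) ℂ) : (ptr₂ ρ).trace = ρ.trace := by
  simp [Matrix.trace, ptr₂, Fintype.sum_prod_type]

lemma trace_ptr₁ (ρ : Matrix (Fin n × Fin m) (Fin n × Fin m) ℂ) : (ptr₁ ρ).trace = ρ.trace := by
  simp [Matrix.trace, ptr₁, Fintype.sum_prod_type, Finset.sum_comm (γ := Fin n)]

lemma IsDensity.ptr₂ {ρ : Matrix (Fin n × Fin m) (Fin n × Fin m) ℂ} (hρ : IsDensity ρ) :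
    IsDensity (ptr₂ ρ) :=
  ⟨ptr₂_eq_sum_submatrix ρ ▸ posSemidef_sum _ fun _ _ => hρ.1.submatrix _,
    (trace_ptr₂ ρ).trans hρ.2⟩

lemma IsDensity.ptr₁ {ρ : Matrix (Fin n × Fin m) (Fin n × Fin m) ℂ} (hρ : IsDensity ρ) :
    IsDensity (ptr₁ ρ) :=
  ⟨ptr₁_eq_sum_submatrix ρ ▸ posSemidef_sum _ fun _ _ => hρ.1.submatrix _,
    (trace_ptr₁ ρ).trans hρ.2⟩

lemma ptr₂_kronecker (A : Matrix (Fin n) (Fin n) ℂ) {B : Matrix (Fin m) (Fin m) ℂ}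
    (hB : B.trace = 1) : ptr₂ (A ⊗ₖ B) = A := by
  ext i j
  simp [ptr₂, ← Finset.mul_sum, show ∑ k, B k k = 1 from hB]

lemma ptr₁_kronecker {A : Matrix (Fin n) (Fin n) ℂ} (hA : A.trace = 1)
    (B : Matrix (Fin m) (Fin m) ℂ) : ptr₁ (A ⊗ₖ B) = B := by
  ext i j
  simp [ptr₁, ← Finset.sum_mul, show ∑ k, A k k = 1 from hA]

lemma isLinearMap_ptr₂ : IsLinearMap ℝ (ptr₂ : Matrix (Fin n × Fin m) (Fin n × Fin m) ℂ → _) :=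
  ⟨fun x y => by ext; simp [ptr₂, Finset.sum_add_distrib],
    fun c x => by ext; simp [ptr₂, Finset.smul_sum]⟩

lemma isLinearMap_ptr₁ : IsLinearMap ℝ (ptr₁ : Matrix (Fin n × Fin m) (Fin n × Fin m) ℂ → _) :=
  ⟨fun x y => by ext; simp [ptr₁, Finset.sum_add_distrib],
    fun c x => by ext; simp [ptr₁, Finset.smul_sum]⟩

end partialTrace

section separable
variable {n m : ℕ}

lemma lam_eq_convexHull_image2 (A : Set (Matrix (Fin n) (Fin n) ℂ))
    (B : Set (Matrix (Fin m) (Fin m) ℂ)) : Lam A B = convexHull ℝ (Set.image2 (· ⊗ₖ ·) A B) := by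
  simp only [Lam, Set.image2, eq_comm]

lemma lam_mono {A A' : Set (Matrix (Fin n) (Fin n) ℂ)} {B B' : Set (Matrix (Fin m) (Fin m) ℂ)}
    (hA : A ⊆ A') (hB : B ⊆ B') : Lam A B ⊆ Lam A' B' := by
  simp only [lam_eq_convexHull_image2]
  exact convexHull_mono (Set.image2_subset hA hB)

lemma lam_convexHull_convexHull (A : Set (Matrix (Fin n) (Fin n) ℂ))
    (B : Set (Matrix (Fin m) (Fin m) ℂ)) : Lam (convexHull ℝ A) (convexHull ℝ B) = Lam A B := by
  simpa [lam_eq_convexHull_image2, kroneckerBilinear] using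
    convexHull_image2_convexHull (kroneckerBilinear (R := ℝ)) A B

lemma lamTau_lam {A : Set (Matrix (Fin n) (Fin n) ℂ)} {B : Set (Matrix (Fin m) (Fin m) ℂ)}
    (hA : ∀ a ∈ A, a.trace = 1) (hB : ∀ b ∈ B, b.trace = 1) : LamTau (Lam A B) = Lam A B := by
  set P := Set.image2 (· ⊗ₖ ·) A B
  have hP : ∀ x ∈ P, ptr₂ x ⊗ₖ ptr₁ x = x := by
    rintro _ ⟨a, ha, b, hb, rfl⟩
    rw [ptr₂_kronecker a (hB b hb), ptr₁_kronecker (hA a ha) b]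
  calc LamTau (Lam A B) = Lam (ptr₂ '' P) (ptr₁ '' P) := by
        rw [LamTau, lam_eq_convexHull_image2 A B, isLinearMap_ptr₂.image_convexHull,
          isLinearMap_ptr₁.image_convexHull, lam_convexHull_convexHull]
    _ = Lam A B := by
      refine (lam_mono ?_ ?_).antisymm ?_
      · rintro _ ⟨_, ⟨a, ha, b, hb, rfl⟩, rfl⟩
        rwa [ptr₂_kronecker a (hB b hb)]
      · rintro _ ⟨_, ⟨a, ha, b, hb, rfl⟩, rfl⟩
        rwa [ptr₁_kronecker (hA a ha) b]
      · rw [lam_eq_convexHull_image2, lam_eq_convexHull_image2]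
        exact convexHull_mono fun x hx => ⟨ptr₂ x, ⟨x, hx, rfl⟩, ptr₁ x, ⟨x, hx, rfl⟩, hP x hx⟩

lemma sepState_of_mem_lam {A : Set (Matrix (Fin n) (Fin n) ℂ)}
    {B : Set (Matrix (Fin m) (Fin m) ℂ)} (hA : ∀ a ∈ A, IsDensity a) (hB : ∀ b ∈ B, IsDensity b)
    {ρ : Matrix (Fin n × Fin m) (Fin n × Fin m) ℂ} (hρ : ρ ∈ Lam A B) : SepState ρ := by
  rw [lam_eq_convexHull_image2, mem_convexHull_iff_exists_fintype] at hρ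
  obtain ⟨ι, _, w, z, hw0, hw1, hz, rfl⟩ := hρ
  choose a ha b hb hab using hz
  let e := (Fintype.equivFin ι).symm
  refine ⟨Fintype.card ι, w ∘ e, a ∘ e, b ∘ e, fun i => hw0 _, ?_,
    fun i => ⟨hA _ (ha _), hB _ (hb _)⟩, ?_⟩
  · rwa [Function.comp_def, e.sum_comp w]
  · simp only [Function.comp_apply, hab]
    exact (e.sum_comp fun i => w i • z i).symm

lemma SepState.exists_polytope_lamTau_invariant {ρ : Matrix (Fin n × Fin m) (Fin n × Fin m) ℂ}
    (h : SepState ρ) :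
    ∃ F : Finset (Matrix (Fin n × Fin m) (Fin n × Fin m) ℂ),
      (∀ σ ∈ F, IsDensity σ) ∧
        ρ ∈ convexHull ℝ (F : Set (Matrix (Fin n × Fin m) (Fin n × Fin m) ℂ)) ∧
        LamTau (convexHull ℝ (F : Set (Matrix (Fin n × Fin m) (Fin n × Fin m) ℂ))) =
          convexHull ℝ (F : Set (Matrix (Fin n × Fin m) (Fin n × Fin m) ℂ)) := by
  classical
  obtain ⟨k, p, a, b, hp, hp1, hab, rfl⟩ := h
  set F := Finset.image₂ (· ⊗ₖ ·) (univ.image a) (univ.image b)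
  have hF : convexHull ℝ (F : Set (Matrix (Fin n × Fin m) (Fin n × Fin m) ℂ)) =
      Lam (Set.range a) (Set.range b) := by
    rw [lam_eq_convexHull_image2, Finset.coe_image₂]
    simp
  refine ⟨F, ?_, ?_, ?_⟩
  · simp only [F, Finset.mem_image₂, Finset.mem_image]
    rintro _ ⟨_, ⟨i, -, rfl⟩, _, ⟨j, -, rfl⟩, rfl⟩
    exact (hab i).1.kronecker (hab j).2
  · rw [hF, lam_eq_convexHull_image2]
    exact (convex_convexHull ℝ _).sum_mem (fun i _ => hp i) hp1 fun i _ =>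
      subset_convexHull ℝ _ (Set.mem_image2_of_mem (Set.mem_range_self i) (Set.mem_range_self i))
  · rw [hF]
    exact lamTau_lam (by rintro _ ⟨i, rfl⟩; exact (hab i).1.2)
      (by rintro _ ⟨j, rfl⟩; exact (hab j).2.2)

end separable

theorem separable_iff_mem_invariant_convex_general {n m : ℕ}
    (ρ : Matrix (Fin n × Fin m) (Fin n × Fin m) ℂ) :
    (SepState ρ ↔
      ∃ S : Set (Matrix (Fin n × Fin m) (Fin n × Fin m) ℂ),
        Convex ℝ S ∧ (∀ σ ∈ S, IsDensity σ) ∧ ρ ∈ S ∧ LamTau S = S) ∧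
    (SepState ρ →
      ∃ F : Finset (Matrix (Fin n × Fin m) (Fin n × Fin m) ℂ),
        (∀ σ ∈ F, IsDensity σ) ∧
        ρ ∈ convexHull ℝ ((F : Set (Matrix (Fin n × Fin m) (Fin n × Fin m) ℂ))) ∧
        LamTau (convexHull ℝ ((F : Set (Matrix (Fin n × Fin m) (Fin n × Fin m) ℂ)))) =
          convexHull ℝ ((F : Set (Matrix (Fin n × Fin m) (Fin n × Fin m) ℂ)))) := by
  refine ⟨⟨fun h => ?_, ?_⟩, SepState.exists_polytope_lamTau_invariant⟩
  · obtain ⟨F, hF, hρF, hinv⟩ := h.exists_polytope_lamTau_invariant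
    exact ⟨_, convex_convexHull ℝ _, fun σ hσ => convexHull_min hF convex_setOf_isDensity hσ,
      hρF, hinv⟩
  · rintro ⟨S, -, hS, hρS, hinv⟩
    rw [← hinv] at hρS
    exact sepState_of_mem_lam (by rintro _ ⟨σ, hσ, rfl⟩; exact (hS σ hσ).ptr₂)
      (by rintro _ ⟨σ, hσ, rfl⟩; exact (hS σ hσ).ptr₁) hρS

theorem separable_iff_mem_invariant_convex {n m : ℕ}
    (ρ : Matrix (Fin n × Fin m) (Fin n × Fin m) ℂ) (hρ : IsDensity ρ) :
    (SepState ρ ↔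
      ∃ S : Set (Matrix (Fin n × Fin m) (Fin n × Fin m) ℂ),
        Convex ℝ S ∧ (∀ σ ∈ S, IsDensity σ) ∧ ρ ∈ S ∧ LamTau S = S) ∧
    (SepState ρ →
      ∃ F : Finset (Matrix (Fin n × Fin m) (Fin n × Fin m) ℂ),
        (∀ σ ∈ F, IsDensity σ) ∧
        ρ ∈ convexHull ℝ ((F : Set (Matrix (Fin n × Fin m) (Fin n × Fin m) ℂ))) ∧
        LamTau (convexHull ℝ ((F : Set (Matrix (Fin n × Fin m) (Fin n × Fin m) ℂ)))) =
          convexHull ℝ ((F : Set (Matrix (Fin n × Fin m) (Fin n × Fin m) ℂ)))) :=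
  separable_iff_mem_invariant_convex_general ρ
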